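/- arXiv:math/0001165 — 2 statements merged into one kernel-verified Lean document; each statement's English description precedes it below -/
import Mathlib

section
/- Let V be a weighted digraph, F a minimal-weight spanning forest with n trees and G a minimal-weight spanning forest with m trees, m ≥ n. Let D be a subset of vertices such that the D-exchange P of F by G and the D-exchange Q of G by F are forests. If D contains l ≥ 0 more roots of F than roots of G, then P is a minimal-weight spanning forest with n - l trees and Q is a minimal-weight spanning forest with m + l trees. -/
open Relation

/-- The arc relation of a functional digraph: `F i = some j` means there is an arc `i → j`. -/
def Arc {V : Type*} (F : V → Option V) (i j : V) : Prop := F i = some j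

/-- A directed forest: a functional digraph (out-degree ≤ 1) without directed circuits. -/
def IsForest {V : Type*} (F : V → Option V) : Prop :=
  ∀ i, ¬ Relation.TransGen (Arc F) i i

/-- `j` is accessible from `i` by a directed walk. -/
def Reaches {V : Type*} (F : V → Option V) (i j : V) : Prop :=
  Relation.ReflTransGen (Arc F) i j

open Classical in
/-- The `D`-exchange of `F` by `G`: replace the outgoing arcs (in `F`) of vertices of `D`
by their outgoing arcs in `G`. -/
noncomputable def exchange {V : Type*} (D : Set V) (F G : V → Option V) : V → Option V :=
  fun i => if i ∈ D then G i else F i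

/-- The set of vertices of the tree of the forest `F` with root `r`. -/
def treeSet {V : Type*} (F : V → Option V) (r : V) : Set V := {i | Reaches F i r}

section Weighted

variable {V : Type*} [Fintype V] [DecidableEq V]

/-- A spanning forest of the digraph with arc relation `A`. -/
def IsSpanningForest (A : V → V → Prop) (F : V → Option V) : Prop :=
  IsForest F ∧ ∀ i j, F i = some j → A i j

/-- The number of trees (= roots) of a forest. -/
def numTrees (F : V → Option V) : ℕ :=
  (Finset.univ.filter (fun i => F i = none)).card

/-- The weight of a forest: the sum of the weights of its arcs. -/
noncomputable def weight (w : V → V → ℝ) (F : V → Option V) : ℝ :=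
  ∑ i, (F i).elim 0 (w i)

/-- `F` is a minimal-weight (extreme) spanning forest with `k` trees. -/
def ExtremeForest (A : V → V → Prop) (w : V → V → ℝ) (k : ℕ) (F : V → Option V) : Prop :=
  IsSpanningForest A F ∧ numTrees F = k ∧
    ∀ G, IsSpanningForest A G → numTrees G = k → weight w F ≤ weight w G

/-- `φ_k`: the minimum weight of a spanning forest with exactly `k` trees. -/
noncomputable def phi (A : V → V → Prop) (w : V → V → ℝ) (k : ℕ) : ℝ :=
  sInf (weight w '' {F | IsSpanningForest A F ∧ numTrees F = k})

end Weighted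

/-!
Exchanging on `D` preserves the total weight: `w P + w Q = w F + w G`. So both claims follow
from the inequality `w F + w G ≤ w H + w K` for any spanning forests `H`, `K` with `n - l` and
`m + l` trees. To prove it, pick `l` roots of `K` whose trees contain no root of `H` (at most
`numTrees H` roots of `K` are reached from roots of `H`) and exchange `H` and `K` on the union `E`
of these trees. As `E` and its complement are closed under the arcs of `K`, both exchanges are
forests; they have `n` and `m` trees, so their total weight `w H + w K` is at least
`w F + w G`.
-/

open Finset

section Reachability

variable {V : Type*} {F : V → Option V}

theorem Reaches.eq_of_isRoot {r i : V} (hr : F r = none) (h : Reaches F r i) : i = r := by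
  rcases h.cases_head with rfl | ⟨c, hc, -⟩
  · rfl
  · simp [Arc, hr] at hc

theorem Reaches.of_arc_of_ne {i j k : V} (h : Reaches F i j) (hik : F i = some k) (hij : i ≠ j) :
    Reaches F k j := by
  rcases h.cases_head with rfl | ⟨c, hc, hcj⟩
  · exact absurd rfl hij
  · rwa [Option.some_inj.mp (hik.symm.trans hc)]

theorem Reaches.root_unique {i r₁ r₂ : V} (h₁ : Reaches F i r₁) (h₂ : Reaches F i r₂)
    (hr₁ : F r₁ = none) (hr₂ : F r₂ = none) : r₁ = r₂ := by
  induction h₁ using Relation.ReflTransGen.head_induction_on with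
  | refl => exact (h₂.eq_of_isRoot hr₁).symm
  | head hic _ ih => exact ih (h₂.of_arc_of_ne hic (by rintro rfl; simp [Arc, hr₂] at hic))

end Reachability

section Exchange

variable {V : Type*} {F G : V → Option V} {D : Set V}

theorem exchange_of_mem {i : V} (hi : i ∈ D) : exchange D F G i = G i := if_pos hi

theorem exchange_of_notMem {i : V} (hi : i ∉ D) : exchange D F G i = F i := if_neg hi

theorem exchange_compl (D : Set V) (F G : V → Option V) :
    exchange Dᶜ G F = exchange D F G := by
  funext i
  by_cases hi : i ∈ D <;> simp [exchange, hi]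

theorem transGen_exchange_of_mem (hD : ∀ i ∈ D, ∀ j, G i = some j → j ∈ D) {i j : V}
    (hi : i ∈ D) (h : TransGen (Arc (exchange D F G)) i j) :
    j ∈ D ∧ TransGen (Arc G) i j := by
  induction h with
  | single hij =>
    rw [Arc, exchange_of_mem hi] at hij
    exact ⟨hD i hi _ hij, .single hij⟩
  | tail _ hkj ih =>
    obtain ⟨hk, hik⟩ := ih
    rw [Arc, exchange_of_mem hk] at hkj
    exact ⟨hD _ hk _ hkj, hik.tail hkj⟩

theorem transGen_exchange_of_notMem (hD : ∀ i ∈ D, ∀ j, G i = some j → j ∈ D) {i j : V}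
    (h : TransGen (Arc (exchange D F G)) i j) (hj : j ∉ D) : TransGen (Arc F) i j := by
  induction h with
  | single hij =>
    by_cases hi : i ∈ D
    · rw [Arc, exchange_of_mem hi] at hij
      exact absurd (hD i hi _ hij) hj
    · rw [Arc, exchange_of_notMem hi] at hij
      exact .single hij
  | @tail k j _ hkj ih =>
    by_cases hk : k ∈ D
    · rw [Arc, exchange_of_mem hk] at hkj
      exact absurd (hD k hk _ hkj) hj
    · rw [Arc, exchange_of_notMem hk] at hkj
      exact (ih hk).tail hkj

theorem isForest_exchange (hF : IsForest F) (hG : IsForest G)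
    (hD : ∀ i ∈ D, ∀ j, G i = some j → j ∈ D) : IsForest (exchange D F G) := by
  intro i hii
  by_cases hi : i ∈ D
  · exact hG i (transGen_exchange_of_mem hD hi hii).2
  · exact hF i (transGen_exchange_of_notMem hD hii hi)

theorem isSpanningForest_exchange {A : V → V → Prop}
    (hF : IsSpanningForest A F) (hG : IsSpanningForest A G) (h : IsForest (exchange D F G)) :
    IsSpanningForest A (exchange D F G) := by
  refine ⟨h, fun i j hij => ?_⟩
  by_cases hi : i ∈ D
  · exact hG.2 i j (by rwa [exchange_of_mem hi] at hij)
  · exact hF.2 i j (by rwa [exchange_of_notMem hi] at hij)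

end Exchange

section Counting

variable {V : Type*} [Fintype V]

theorem weight_exchange_add_weight_exchange (w : V → V → ℝ) (D : Set V) (F G : V → Option V) :
    weight w (exchange D F G) + weight w (exchange D G F) = weight w F + weight w G := by
  simp only [weight, ← sum_add_distrib]
  refine sum_congr rfl fun i _ => ?_
  by_cases hi : i ∈ D
  · rw [exchange_of_mem hi, exchange_of_mem hi, add_comm]
  · rw [exchange_of_notMem hi, exchange_of_notMem hi]

theorem numTrees_eq_card_add_card [DecidableEq V] (D : Finset V) (F : V → Option V) :
    numTrees F = #{i ∈ D | F i = none} + #{i ∈ Dᶜ | F i = none} := by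
  rw [numTrees, ← card_filter_add_card_filter_not (s := univ.filter (F · = none)) (· ∈ D),
    filter_filter, filter_filter]
  congr 2 <;> ext i <;> simp [and_comm]

theorem numTrees_exchange_add [DecidableEq V] (D : Finset V) (F G : V → Option V) :
    numTrees (exchange (↑D) F G) + #{i ∈ D | F i = none} =
      numTrees F + #{i ∈ D | G i = none} := by
  have hD : {i ∈ D | exchange (↑D) F G i = none} = {i ∈ D | G i = none} :=
    filter_congr fun i hi => by rw [exchange_of_mem (mem_coe.2 hi)]
  have hDc : {i ∈ Dᶜ | exchange (↑D) F G i = none} = {i ∈ Dᶜ | F i = none} :=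
    filter_congr fun i hi => by rw [exchange_of_notMem (by simpa using hi)]
  rw [numTrees_eq_card_add_card D, numTrees_eq_card_add_card D F, hD, hDc]
  ring

theorem exists_roots_unreached {H K : V → Option V} {l : ℕ} (hl : numTrees H + l ≤ numTrees K) :
    ∃ S : Finset V, #S = l ∧ ∀ r ∈ S, K r = none ∧ ∀ i, H i = none → ¬ Reaches K i r := by
  classical
  set R := univ.filter (K · = none)
  have hreached : #{r ∈ R | ∃ i, H i = none ∧ Reaches K i r} ≤ numTrees H := by
    refine card_le_card_of_forall_subsingleton (fun r i => Reaches K i r) (fun r hr => ?_) ?_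
    · obtain ⟨i, hi, hir⟩ := (mem_filter.1 hr).2
      exact ⟨i, mem_filter.2 ⟨mem_univ i, hi⟩, hir⟩
    · intro i _ r₁ hr₁ r₂ hr₂
      simp only [R, Set.mem_ofPred_eq, mem_filter, mem_univ, true_and] at hr₁ hr₂
      exact hr₁.2.root_unique hr₂.2 hr₁.1.1 hr₂.1.1
  have hsplit := card_filter_add_card_filter_not (s := R) fun r => ∃ i, H i = none ∧ Reaches K i r
  have hR : numTrees K = #R := rfl
  obtain ⟨S, hSR, hS⟩ := exists_subset_card_eq
    (show l ≤ #{r ∈ R | ¬ ∃ i, H i = none ∧ Reaches K i r} by omega)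
  refine ⟨S, hS, fun r hr => ?_⟩
  obtain ⟨hrR, hunreached⟩ := mem_filter.1 (hSR hr)
  simp only [not_exists, not_and] at hunreached
  exact ⟨(mem_filter.1 hrR).2, hunreached⟩

theorem exists_exchange_numTrees [DecidableEq V] {H K : V → Option V} (hH : IsForest H)
    (hK : IsForest K) {l : ℕ} (hl : numTrees H + l ≤ numTrees K) :
    ∃ D : Finset V, IsForest (exchange (↑D) H K) ∧ IsForest (exchange (↑D) K H) ∧
      numTrees (exchange (↑D) H K) = numTrees H + l ∧
      numTrees (exchange (↑D) K H) + l = numTrees K := by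
  classical
  obtain ⟨S, hSl, hS⟩ := exists_roots_unreached hl
  set D := univ.filter fun i => ∃ r ∈ S, Reaches K i r
  have hmem : ∀ i, i ∈ (D : Set V) ↔ ∃ r ∈ S, Reaches K i r := by simp [D]
  have hclosed : ∀ i ∈ (D : Set V), ∀ j, K i = some j → j ∈ (D : Set V) := by
    intro i hi j hij
    obtain ⟨r, hr, hir⟩ := (hmem i).1 hi
    exact (hmem j).2 ⟨r, hr, hir.of_arc_of_ne hij (by rintro rfl; simp [(hS _ hr).1] at hij)⟩
  have hclosedCompl : ∀ i ∈ (D : Set V)ᶜ, ∀ j, K i = some j → j ∈ (D : Set V)ᶜ := by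
    intro i hi j hij hj
    obtain ⟨r, hr, hjr⟩ := (hmem j).1 hj
    exact hi ((hmem i).2 ⟨r, hr, Relation.ReflTransGen.head hij hjr⟩)
  have hKroots : #{i ∈ D | K i = none} = l := by
    rw [← hSl]
    congr 1
    ext i
    simp only [mem_filter, D, mem_univ, true_and]
    constructor
    · rintro ⟨⟨r, hr, hir⟩, hi⟩
      rwa [hir.eq_of_isRoot hi] at hr
    · exact fun hi => ⟨⟨i, hi, .refl⟩, (hS i hi).1⟩
  have hHroots : #{i ∈ D | H i = none} = 0 := by
    refine card_eq_zero.2 (filter_eq_empty_iff.2 fun i hi hHi => ?_)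
    obtain ⟨r, hr, hir⟩ := (hmem i).1 hi
    exact (hS r hr).2 i hHi hir
  have hP := numTrees_exchange_add D H K
  have hQ := numTrees_exchange_add D K H
  refine ⟨D, isForest_exchange hH hK hclosed, ?_, by omega, by omega⟩
  rw [← exchange_compl]
  exact isForest_exchange hH hK hclosedCompl

theorem weight_add_weight_le_of_extremeForest [DecidableEq V] {A : V → V → Prop}
    {w : V → V → ℝ} {n m l : ℕ} {F G H K : V → Option V} (hF : ExtremeForest A w n F)
    (hG : ExtremeForest A w m G) (hH : IsSpanningForest A H) (hK : IsSpanningForest A K)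
    (hHn : numTrees H + l = n) (hKm : numTrees K = m + l) (hnm : n ≤ m + l) :
    weight w F + weight w G ≤ weight w H + weight w K := by
  obtain ⟨D, hP, hQ, hPn, hQm⟩ := exists_exchange_numTrees hH.1 hK.1 (l := l) (by omega)
  calc weight w F + weight w G
      ≤ weight w (exchange (↑D) H K) + weight w (exchange (↑D) K H) :=
        add_le_add (hF.2.2 _ (isSpanningForest_exchange hH hK hP) (by omega))
          (hG.2.2 _ (isSpanningForest_exchange hK hH hQ) (by omega))
    _ = weight w H + weight w K := weight_exchange_add_weight_exchange w _ H K

end Counting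

/-- Proposition 3(a): if `D` contains `l ≥ 0` more roots of `F` than roots of `G`, and both
`D`-exchanges are forests, then the `D`-exchange of `F` by `G` is a minimal-weight spanning
forest with `n - l` trees and the `D`-exchange of `G` by `F` is a minimal-weight spanning
forest with `m + l` trees. -/
theorem exchange_extreme_of_more_F_roots {V : Type*} [Fintype V] [DecidableEq V]
    (A : V → V → Prop) (w : V → V → ℝ) (n m l : ℕ) (hnm : n ≤ m)
    (F G : V → Option V) (hF : ExtremeForest A w n F) (hG : ExtremeForest A w m G)
    (D : Finset V)
    (hP : IsForest (exchange (↑D) F G)) (hQ : IsForest (exchange (↑D) G F))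
    (hcount : (D.filter (fun i => F i = none)).card
      = (D.filter (fun i => G i = none)).card + l) :
    ExtremeForest A w (n - l) (exchange (↑D) F G) ∧
      ExtremeForest A w (m + l) (exchange (↑D) G F) := by
  have hPs := isSpanningForest_exchange hF.1 hG.1 hP
  have hQs := isSpanningForest_exchange hG.1 hF.1 hQ
  have hPn : numTrees (exchange (↑D) F G) + l = n := by
    have := numTrees_exchange_add D F G
    have := hF.2.1
    omega
  have hQm : numTrees (exchange (↑D) G F) = m + l := by
    have := numTrees_exchange_add D G F
    have := hG.2.1
    omega
  have hw := weight_exchange_add_weight_exchange w (↑D) F G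
  refine ⟨⟨hPs, by omega, fun H hH hHn => ?_⟩, ⟨hQs, hQm, fun K hK hKm => ?_⟩⟩
  · have := weight_add_weight_le_of_extremeForest hF hG hH hQs (by omega) hQm (by omega)
    linarith
  · have := weight_add_weight_le_of_extremeForest hF hG hPs hK hPn hKm (by omega)
    linarith
end

section
/- Let V be a weighted digraph and suppose φ_{k-1} - φ_k > φ_k - φ_{k+1}. Then the algebra A_k (generated by vertex sets of trees of minimal-weight spanning k-forests) contains exactly k marked elementary sets, i.e., exactly k atoms containing at least one vertex that is a root of some minimal-weight spanning k-forest. -/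
open Relation

section Algebras

variable {V : Type*} [Fintype V] [DecidableEq V]

/-- The generating family of `A_k`: vertex sets of trees of minimal-weight spanning
`k`-forests. -/
def genSets (A : V → V → Prop) (w : V → V → ℝ) (k : ℕ) : Set (Set V) :=
  {S | ∃ F r, ExtremeForest A w k F ∧ F r = none ∧ S = treeSet F r}

/-- The algebra `A_k` of subsets of the vertex set generated by the vertex sets of trees of
minimal-weight spanning `k`-forests. -/
noncomputable def alg (A : V → V → Prop) (w : V → V → ℝ) (k : ℕ) : MeasurableSpace V :=
  MeasurableSpace.generateFrom (genSets A w k)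

/-- `E` is an elementary set (atom) of the algebra `m`. -/
def IsElementary (m : MeasurableSpace V) (E : Set V) : Prop :=
  @MeasurableSet V m E ∧ E.Nonempty ∧ ∀ S, @MeasurableSet V m S → S ⊆ E → S = ∅ ∨ S = E

/-- `i` is a marked vertex of level `k`: a root of some minimal-weight spanning `k`-forest. -/
def IsMarked (A : V → V → Prop) (w : V → V → ℝ) (k : ℕ) (i : V) : Prop :=
  ∃ F, ExtremeForest A w k F ∧ F i = none

end Algebras

/-!
Strict convexity `φ_{k-1} + φ_{k+1} > 2 φ_k` rigidly interlocks any two minimal `k`-forests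
`P` and `Q`. Exchanging the arcs of `P` for those of `Q` on a tree `T` of `Q`, and separately
off `T`, gives two spanning forests whose weights add up to `2 φ_k` and whose numbers of trees
add up to `2k`. If `T` contained no root of `P` they would have `k + 1` and `k - 1` trees,
contradicting convexity; so each tree of `Q` contains exactly one root of `P`, and both exchanged
forests are again minimal `k`-forests. Two such exchanges show that a marked vertex `i` and its
root in a minimal forest `F` lie in the same tree of every minimal forest, i.e. in the same atom
of `A_k`. So every marked atom is the atom of a root of `F`, and the `k` roots of `F` lie in
distinct atoms since the trees of `F` separate them.
-/

open Finset

section Forest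

variable {V : Type*} {F : V → Option V} {i r x : V}

lemma eq_of_root_reaches (hr : F r = none) (h : Reaches F r x) : x = r := by
  rcases h.cases_head with h | ⟨_, hc, _⟩
  · exact h.symm
  · simp [Arc, hr] at hc

lemma reaches_total {a b : V} (ha : Reaches F i a) (hb : Reaches F i b) :
    Reaches F a b ∨ Reaches F b a := by
  induction ha using ReflTransGen.head_induction_on with
  | refl => exact .inl hb
  | @head x c hxc hca ih =>
    rcases hb.cases_head with rfl | ⟨d, hxd, hdb⟩
    · exact .inr (.head hxc hca)
    · obtain rfl : c = d := Option.some.inj (hxc.symm.trans hxd)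
      exact ih hdb

lemma eq_of_reaches_roots {r' : V} (h : Reaches F i r) (hr : F r = none)
    (h' : Reaches F i r') (hr' : F r' = none) : r = r' := by
  rcases reaches_total h h' with h | h
  · exact (eq_of_root_reaches hr h).symm
  · exact eq_of_root_reaches hr' h

open Classical in
noncomputable def rootOf (F : V → Option V) (i : V) : V :=
  if h : ∃ r, Reaches F i r ∧ F r = none then h.choose else i

variable [Finite V]

lemma IsForest.exists_root (hF : IsForest F) (i : V) :
    ∃ r, Reaches F i r ∧ F r = none := by
  let R : V → V → Prop := fun y x => TransGen (Arc F) x y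
  have : IsTrans V R := ⟨fun _ _ _ h₁ h₂ => h₂.trans h₁⟩
  have : Std.Irrefl R := ⟨hF⟩
  induction i using (Finite.wellFounded_of_trans_of_irrefl R).induction with
  | _ i ih =>
    cases h : F i with
    | none => exact ⟨i, .refl, h⟩
    | some j =>
      obtain ⟨r, hjr, hr⟩ := ih j (.single h)
      exact ⟨r, .head h hjr, hr⟩

lemma IsForest.rootOf_spec (hF : IsForest F) (i : V) :
    Reaches F i (rootOf F i) ∧ F (rootOf F i) = none := by
  rw [rootOf, dif_pos (hF.exists_root i)]
  exact (hF.exists_root i).choose_spec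

lemma IsForest.apply_rootOf (hF : IsForest F) (i : V) : F (rootOf F i) = none :=
  (hF.rootOf_spec i).2

lemma IsForest.rootOf_eq (hF : IsForest F) (h : Reaches F i r) (hr : F r = none) :
    rootOf F i = r :=
  eq_of_reaches_roots (hF.rootOf_spec i).1 (hF.rootOf_spec i).2 h hr

lemma IsForest.rootOf_of_eq_none (hF : IsForest F) (hr : F r = none) :
    rootOf F r = r :=
  hF.rootOf_eq .refl hr

lemma IsForest.mem_treeSet_iff (hF : IsForest F) (hr : F r = none) :
    i ∈ treeSet F r ↔ rootOf F i = r :=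
  ⟨fun h => hF.rootOf_eq h hr, fun h => h ▸ (hF.rootOf_spec i).1⟩

lemma IsForest.mem_treeSet_rootOf (hF : IsForest F) (i : V) :
    i ∈ treeSet F (rootOf F i) :=
  (hF.rootOf_spec i).1

end Forest

section Exchange

variable {V : Type*} {D : Set V} {P Q : V → Option V} {x : V}

lemma exchange_of_mem_s13 (hx : x ∈ D) : exchange D P Q x = Q x := by simp [exchange, hx]

lemma exchange_of_notMem_s13 (hx : x ∉ D) : exchange D P Q x = P x := by simp [exchange, hx]

lemma isForest_exchange_s13 (hP : IsForest P) (hQ : IsForest Q)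
    (hD : ∀ x ∈ D, ∀ y, Q x = some y → y ∈ D) : IsForest (exchange D P Q) := by
  have arc_of_mem : ∀ {x y}, x ∈ D → Arc (exchange D P Q) x y → Arc Q x y ∧ y ∈ D := by
    intro x y hx h
    rw [Arc, exchange_of_mem_s13 hx] at h
    exact ⟨h, hD x hx y h⟩
  -- a walk that starts in `D` never leaves it, one that ends outside `D` never entered it
  have walk_from_mem : ∀ {x y}, TransGen (Arc (exchange D P Q)) x y → x ∈ D →
      TransGen (Arc Q) x y := by
    intro x y h hx
    induction h using TransGen.head_induction_on with
    | single h => exact .single (arc_of_mem hx h).1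
    | head h _ ih => exact .head (arc_of_mem hx h).1 (ih (arc_of_mem hx h).2)
  have walk_to_notMem : ∀ {x y}, TransGen (Arc (exchange D P Q)) x y → y ∉ D →
      TransGen (Arc P) x y := by
    intro x y h hy
    induction h with
    | @single b h =>
      have hx : x ∉ D := fun hx => hy (arc_of_mem hx h).2
      exact .single (by rwa [Arc, exchange_of_notMem_s13 hx] at h)
    | @tail b c _ h ih =>
      have hb : b ∉ D := fun hb => hy (arc_of_mem hb h).2
      exact .tail (ih hb) (by rwa [Arc, exchange_of_notMem_s13 hb] at h)
  intro x hx
  by_cases hxD : x ∈ D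
  · exact hQ x (walk_from_mem hx hxD)
  · exact hP x (walk_to_notMem hx hxD)

lemma IsSpanningForest.exchange [Fintype V] {A : V → V → Prop} (hP : IsSpanningForest A P)
    (hQ : IsSpanningForest A Q) (hD : ∀ x ∈ D, ∀ y, Q x = some y → y ∈ D) :
    IsSpanningForest A (exchange D P Q) := by
  refine ⟨isForest_exchange_s13 hP.1 hQ.1 hD, fun i j h => ?_⟩
  by_cases hi : i ∈ D
  · exact hQ.2 i j (by rwa [exchange_of_mem_s13 hi] at h)
  · exact hP.2 i j (by rwa [exchange_of_notMem_s13 hi] at h)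

lemma treeSet_closed {ρ : V} (hρ : Q ρ = none) :
    ∀ x ∈ treeSet Q ρ, ∀ y, Q x = some y → y ∈ treeSet Q ρ := by
  intro x hx y hxy
  rcases hx.cases_head with rfl | ⟨c, hxc, hcρ⟩
  · simp [hρ] at hxy
  · rwa [← Option.some.inj (hxy.symm.trans hxc)] at hcρ

lemma treeSet_compl_closed {ρ : V} :
    ∀ x ∈ (treeSet Q ρ)ᶜ, ∀ y, Q x = some y → y ∈ (treeSet Q ρ)ᶜ :=
  fun _ hx _ hxy hy => hx (.head hxy hy)

lemma treeSet_subset_treeSet_exchange {F : V → Option V} {r : V} (G : V → Option V) :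
    treeSet F r ⊆ treeSet (exchange (treeSet F r) G F) r := by
  intro x hx
  induction hx using ReflTransGen.head_induction_on with
  | refl => exact .refl
  | @head a c hac hcr ih =>
    refine .head ?_ ih
    rwa [Arc, exchange_of_mem_s13 (show a ∈ treeSet F r from .head hac hcr)]

variable [Fintype V]

def rootFinset (F : V → Option V) : Finset V := Finset.univ.filter (fun i => F i = none)

lemma card_rootFinset (F : V → Option V) : #(rootFinset F) = numTrees F := rfl

@[simp] lemma mem_rootFinset {F : V → Option V} : x ∈ rootFinset F ↔ F x = none := by
  simp [rootFinset]

lemma weight_exchange_add_weight_exchange_compl (w : V → V → ℝ) (D : Set V)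
    (P Q : V → Option V) :
    weight w (exchange D P Q) + weight w (exchange Dᶜ P Q) = weight w P + weight w Q := by
  rw [weight, weight, weight, weight, ← sum_add_distrib, ← sum_add_distrib]
  refine sum_congr rfl fun x _ => ?_
  by_cases hx : x ∈ D
  · rw [exchange_of_mem_s13 hx, exchange_of_notMem_s13 (Set.notMem_compl_iff.2 hx), add_comm]
  · rw [exchange_of_notMem_s13 hx, exchange_of_mem_s13 (Set.mem_compl hx)]

lemma numTrees_exchange (D : Set V) [DecidablePred (· ∈ D)] (P Q : V → Option V) :
    numTrees (exchange D P Q) =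
      #{x ∈ rootFinset Q | x ∈ D} + #{x ∈ rootFinset P | x ∉ D} := by
  rw [← card_rootFinset, ← card_filter_add_card_filter_not (p := (· ∈ D))]
  congr 2 <;> ext x
  · by_cases hx : x ∈ D <;> simp [hx, exchange_of_mem_s13]
  · by_cases hx : x ∈ D <;> simp [hx, exchange_of_notMem_s13]

variable {ρ : V} [DecidablePred (· ∈ treeSet Q ρ)]

lemma filter_rootFinset_mem_treeSet (hρ : Q ρ = none) :
    {x ∈ rootFinset Q | x ∈ treeSet Q ρ} = {ρ} := by
  ext x
  simp only [mem_filter, mem_rootFinset, mem_singleton]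
  exact ⟨fun ⟨hx, hxρ⟩ => (eq_of_root_reaches hx hxρ).symm,
    by rintro rfl; exact ⟨hρ, .refl⟩⟩

lemma numTrees_exchange_treeSet (hρ : Q ρ = none) :
    numTrees (exchange (treeSet Q ρ) P Q) + #{x ∈ rootFinset P | x ∈ treeSet Q ρ} =
      numTrees P + 1 := by
  have := card_filter_add_card_filter_not (s := rootFinset P) (p := (· ∈ treeSet Q ρ))
  rw [numTrees_exchange, filter_rootFinset_mem_treeSet hρ, card_singleton, ← card_rootFinset P]
  omega

lemma numTrees_exchange_compl_treeSet (hρ : Q ρ = none) :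
    numTrees (exchange (treeSet Q ρ)ᶜ P Q) + 1 =
      numTrees Q + #{x ∈ rootFinset P | x ∈ treeSet Q ρ} := by
  have := card_filter_add_card_filter_not (s := rootFinset Q) (p := (· ∈ treeSet Q ρ))
  rw [filter_rootFinset_mem_treeSet hρ, card_singleton, card_rootFinset] at this
  rw [numTrees_exchange]
  simp only [Set.mem_compl_iff, not_not]
  omega

end Exchange

section Phi

variable {V : Type*} [Fintype V] {A : V → V → Prop} {w : V → V → ℝ} {j : ℕ}
  {F : V → Option V}

lemma phi_le_weight (hF : IsSpanningForest A F) (hn : numTrees F = j) : phi A w j ≤ weight w F :=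
  csInf_le ((Set.toFinite _).image _).bddBelow ⟨F, ⟨hF, hn⟩, rfl⟩

lemma ExtremeForest.weight_eq (hF : ExtremeForest A w j F) : weight w F = phi A w j :=
  le_antisymm
    (le_csInf ⟨_, F, ⟨hF.1, hF.2.1⟩, rfl⟩
      fun _ ⟨G, ⟨hG, hGn⟩, hGw⟩ => hGw ▸ hF.2.2 G hG hGn)
    (phi_le_weight hF.1 hF.2.1)

lemma extremeForest_of_weight_le (hF : IsSpanningForest A F) (hn : numTrees F = j)
    (hw : weight w F ≤ phi A w j) : ExtremeForest A w j F :=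
  ⟨hF, hn, fun _ hG hGn => hw.trans (phi_le_weight hG hGn)⟩

lemma exists_extremeForest (hF : IsSpanningForest A F) (hn : numTrees F = j) :
    ∃ P, ExtremeForest A w j P := by
  obtain ⟨P, ⟨hP, hPn⟩, hmin⟩ :=
    Set.exists_min_image {G | IsSpanningForest A G ∧ numTrees G = j} (weight w) (Set.toFinite _)
      ⟨F, hF, hn⟩
  exact ⟨P, hP, hPn, fun G hG hGn => hmin G ⟨hG, hGn⟩⟩

lemma exists_spanningForest_succ (hF : IsSpanningForest A F)
    (hn : numTrees F < Fintype.card V) :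
    ∃ G, IsSpanningForest A G ∧ numTrees G = numTrees F + 1 := by
  classical
  obtain ⟨i, hi⟩ : ∃ i, F i ≠ none := by
    by_contra! h
    simp [numTrees, h] at hn
  have arc_sub : ∀ x y, Arc (Function.update F i none) x y → Arc F x y := by
    intro x y h
    by_cases hx : x = i
    · simp [Arc, hx] at h
    · rwa [Arc, Function.update_of_ne hx] at h
  refine ⟨Function.update F i none, ⟨fun x hx => hF.1 x (TransGen.mono arc_sub x x hx),
    fun x y h => hF.2 x y (arc_sub x y h)⟩, ?_⟩
  rw [← card_rootFinset, ← card_rootFinset, ← card_insert_of_notMem (mem_rootFinset.not.2 hi)]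
  congr 1
  ext x
  by_cases hx : x = i <;> simp [hx]

end Phi

section Extreme

variable {V : Type*} [Fintype V] {A : V → V → Prop} {w : V → V → ℝ} {k : ℕ}
  {P Q : V → Option V} {ρ : V}

lemma exists_root_mem_treeSet
    (hconv : phi A w k - phi A w (k + 1) < phi A w (k - 1) - phi A w k)
    (hP : ExtremeForest A w k P) (hQ : ExtremeForest A w k Q) (hρ : Q ρ = none) :
    ∃ x ∈ treeSet Q ρ, P x = none := by
  classical
  by_contra! hno
  -- otherwise the two exchanges along the tree of `ρ` have `k + 1` and `k - 1` trees,
  -- and weights adding up to `2 φ_k`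
  have hzero : #{x ∈ rootFinset P | x ∈ treeSet Q ρ} = 0 :=
    card_eq_zero.2 (filter_eq_empty_iff.2 fun x hx hxT => hno x hxT (mem_rootFinset.1 hx))
  have hX := numTrees_exchange_treeSet (P := P) hρ
  have hY := numTrees_exchange_compl_treeSet (P := P) hρ
  rw [hzero, hP.2.1] at hX
  rw [hzero, hQ.2.1] at hY
  have h₁ := phi_le_weight (w := w) (hP.1.exchange hQ.1 (treeSet_closed hρ)) (j := k + 1)
    (by omega)
  have h₂ := phi_le_weight (w := w) (hP.1.exchange hQ.1 (treeSet_compl_closed (ρ := ρ)))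
    (j := k - 1) (by omega)
  have hsum := weight_exchange_add_weight_exchange_compl w (treeSet Q ρ) P Q
  rw [hP.weight_eq, hQ.weight_eq] at hsum
  linarith

lemma injOn_rootOf (hconv : phi A w k - phi A w (k + 1) < phi A w (k - 1) - phi A w k)
    (hP : ExtremeForest A w k P) (hQ : ExtremeForest A w k Q) :
    Set.InjOn (rootOf Q) {x | P x = none} := by
  have hcoe : {x | P x = none} = (rootFinset P : Set V) := by ext; simp
  rw [hcoe]
  refine injOn_of_surjOn_of_card_le (t := rootFinset Q) _
    (fun x _ => by simpa using hQ.1.1.apply_rootOf x) (fun ρ hρ => ?_)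
    (by rw [card_rootFinset, card_rootFinset, hP.2.1, hQ.2.1])
  obtain ⟨x, hxT, hx⟩ := exists_root_mem_treeSet hconv hP hQ (mem_rootFinset.1 hρ)
  exact ⟨x, mem_rootFinset.2 hx, hQ.1.1.rootOf_eq hxT (mem_rootFinset.1 hρ)⟩

lemma card_filter_rootFinset_mem_treeSet
    (hconv : phi A w k - phi A w (k + 1) < phi A w (k - 1) - phi A w k)
    (hP : ExtremeForest A w k P) (hQ : ExtremeForest A w k Q) (hρ : Q ρ = none)
    [DecidablePred (· ∈ treeSet Q ρ)] :
    #{x ∈ rootFinset P | x ∈ treeSet Q ρ} = 1 := by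
  obtain ⟨x, hxT, hx⟩ := exists_root_mem_treeSet hconv hP hQ hρ
  refine card_eq_one.2
    ⟨x, eq_singleton_iff_unique_mem.2 ⟨by simp [hx, hxT], fun y hy => ?_⟩⟩
  rw [mem_filter, mem_rootFinset] at hy
  exact injOn_rootOf hconv hP hQ hy.1 hx
    ((hQ.1.1.rootOf_eq hy.2 hρ).trans (hQ.1.1.rootOf_eq hxT hρ).symm)

lemma ExtremeForest.exchange_treeSet
    (hconv : phi A w k - phi A w (k + 1) < phi A w (k - 1) - phi A w k)
    (hP : ExtremeForest A w k P) (hQ : ExtremeForest A w k Q) (hρ : Q ρ = none) :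
    ExtremeForest A w k (exchange (treeSet Q ρ) P Q) ∧
      ExtremeForest A w k (exchange (treeSet Q ρ)ᶜ P Q) := by
  classical
  have hone := card_filter_rootFinset_mem_treeSet hconv hP hQ hρ
  have hX := numTrees_exchange_treeSet (P := P) hρ
  have hY := numTrees_exchange_compl_treeSet (P := P) hρ
  rw [hone, hP.2.1] at hX
  rw [hone, hQ.2.1] at hY
  have hXs := hP.1.exchange hQ.1 (treeSet_closed hρ)
  have hYs := hP.1.exchange hQ.1 (treeSet_compl_closed (ρ := ρ))
  have h₁ := phi_le_weight (w := w) hXs (j := k) (by omega)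
  have h₂ := phi_le_weight (w := w) hYs (j := k) (by omega)
  have hsum := weight_exchange_add_weight_exchange_compl w (treeSet Q ρ) P Q
  rw [hP.weight_eq, hQ.weight_eq] at hsum
  exact ⟨extremeForest_of_weight_le hXs (by omega) (by linarith),
    extremeForest_of_weight_le hYs (by omega) (by linarith)⟩

end Extreme

section Marked

variable {V : Type*} [Fintype V] {A : V → V → Prop} {w : V → V → ℝ} {k : ℕ}
  {F G H : V → Option V} {i : V}

lemma rootOf_mem_treeSet_rootOf
    (hconv : phi A w k - phi A w (k + 1) < phi A w (k - 1) - phi A w k)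
    (hH : ExtremeForest A w k H) (hF : ExtremeForest A w k F) (hG : ExtremeForest A w k G)
    (hi : H i = none) : rootOf G i ∈ treeSet F (rootOf F i) := by
  set r := rootOf F i
  set T := treeSet F r
  have hr : F r = none := hF.1.1.apply_rootOf i
  have hrT : r ∈ T := .refl
  set U := exchange T G F
  have hU : ExtremeForest A w k U := (hG.exchange_treeSet hconv hF hr).1
  have hUr : U r = none := (exchange_of_mem_s13 hrT).trans hr
  have hiU : i ∈ treeSet U r := treeSet_subset_treeSet_exchange G (hF.1.1.mem_treeSet_rootOf i)
  set W := exchange (treeSet U r)ᶜ H U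
  have hW : ExtremeForest A w k W := (hH.exchange_treeSet hconv hU hUr).2
  -- if the `G`-root `ρ` of `i` lay outside `T`, then `i` and `ρ` would be two roots of the
  -- minimal forest `W` in one tree of `G`
  by_contra hρT
  set ρ := rootOf G i
  have hGρ : G ρ = none := hG.1.1.apply_rootOf i
  have hUρ : U ρ = none := (exchange_of_notMem_s13 hρT).trans hGρ
  have hρU : ρ ∉ treeSet U r := fun h => hρT (eq_of_root_reaches hUρ h ▸ hrT)
  have hWi : W i = none := (exchange_of_notMem_s13 (D := (treeSet U r)ᶜ) (not_not.2 hiU)).trans hi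
  have hWρ : W ρ = none := (exchange_of_mem_s13 (D := (treeSet U r)ᶜ) hρU).trans hUρ
  have hiρ : i = ρ := injOn_rootOf hconv hW hG hWi hWρ (hG.1.1.rootOf_of_eq_none hGρ).symm
  exact hρT (hiρ ▸ hF.1.1.mem_treeSet_rootOf i)

lemma rootOf_eq_rootOf_rootOf
    (hconv : phi A w k - phi A w (k + 1) < phi A w (k - 1) - phi A w k)
    (hi : IsMarked A w k i) (hF : ExtremeForest A w k F) (hG : ExtremeForest A w k G) :
    rootOf G i = rootOf G (rootOf F i) := by
  obtain ⟨H, hH, hHi⟩ := hi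
  have hr : F (rootOf F i) = none := hF.1.1.apply_rootOf i
  have hi_mem := rootOf_mem_treeSet_rootOf hconv hH hF hG hHi
  have hr_mem := rootOf_mem_treeSet_rootOf hconv hF hF hG hr
  rw [hF.1.1.rootOf_of_eq_none hr] at hr_mem
  refine injOn_rootOf hconv hG hF (hG.1.1.apply_rootOf _) (hG.1.1.apply_rootOf _) ?_
  rw [(hF.1.1.mem_treeSet_iff hr).1 hi_mem, (hF.1.1.mem_treeSet_iff hr).1 hr_mem]

end Marked

section MeasurableAtom

variable {V : Type*}

lemma measurableAtom_generateFrom_eq {C : Set (Set V)} {x y : V}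
    (h : ∀ S ∈ C, x ∈ S ↔ y ∈ S) :
    @measurableAtom V (.generateFrom C) x = @measurableAtom V (.generateFrom C) y := by
  let _ := MeasurableSpace.generateFrom C
  have hpattern : ∀ S, MeasurableSet S → (x ∈ S ↔ y ∈ S) := by
    intro S hS
    induction S, hS using MeasurableSpace.generateFrom_induction with
    | hC S hS => exact h S hS
    | empty => simp
    | compl S _ ih => exact ih.not
    | iUnion S _ ih => simp only [Set.mem_iUnion]; exact exists_congr ih
  refine measurableAtom_eq_of_mem ?_
  simp only [measurableAtom, Set.mem_iInter]
  exact fun S hyS hS => (hpattern S hS).2 hyS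

variable [m : MeasurableSpace V] [Countable V]

lemma isElementary_measurableAtom (x : V) : IsElementary m (measurableAtom x) := by
  refine ⟨.measurableAtom_of_countable x, ⟨x, mem_measurableAtom_self x⟩,
    fun S hS hSx => ?_⟩
  by_cases hx : x ∈ S
  · exact .inr (hSx.antisymm (measurableAtom_subset hS hx))
  · refine .inl (Set.eq_empty_of_forall_notMem fun y hy => hx ?_)
    have hxy : measurableAtom y = measurableAtom x := measurableAtom_eq_of_mem (hSx hy)
    exact measurableAtom_subset hS hy (hxy ▸ mem_measurableAtom_self x)

lemma IsElementary.eq_measurableAtom {E : Set V} (hE : IsElementary m E) {x : V} (hx : x ∈ E) :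
    E = measurableAtom x :=
  ((hE.2.2 _ (.measurableAtom_of_countable x) (measurableAtom_subset hE.1 hx)).resolve_left
    (Set.nonempty_iff_ne_empty.1 ⟨x, mem_measurableAtom_self x⟩)).symm

end MeasurableAtom

section ElementarySets

variable {V : Type*} [Fintype V] {A : V → V → Prop} {w : V → V → ℝ} {k : ℕ}
  {F : V → Option V}

lemma measurableAtom_alg_rootOf
    (hconv : phi A w k - phi A w (k + 1) < phi A w (k - 1) - phi A w k)
    (hF : ExtremeForest A w k F) {i : V} (hi : IsMarked A w k i) :
    @measurableAtom V (alg A w k) (rootOf F i) = @measurableAtom V (alg A w k) i := by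
  refine measurableAtom_generateFrom_eq ?_
  rintro _ ⟨G, ρ, hG, hρ, rfl⟩
  rw [hG.1.1.mem_treeSet_iff hρ, hG.1.1.mem_treeSet_iff hρ,
    rootOf_eq_rootOf_rootOf hconv hi hF hG]

lemma injOn_measurableAtom_alg (hF : ExtremeForest A w k F) :
    Set.InjOn (@measurableAtom V (alg A w k)) {r | F r = none} := by
  let _ := alg A w k
  intro r hr r' hr' h
  have hT : MeasurableSet (treeSet F r) :=
    MeasurableSpace.measurableSet_generateFrom ⟨F, r, hF, hr, rfl⟩
  exact eq_of_root_reaches hr' (measurableAtom_subset hT .refl (h ▸ mem_measurableAtom_self r'))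

lemma setOf_isElementary_isMarked_eq_image
    (hconv : phi A w k - phi A w (k + 1) < phi A w (k - 1) - phi A w k)
    (hF : ExtremeForest A w k F) :
    {E | IsElementary (alg A w k) E ∧ ∃ i ∈ E, IsMarked A w k i} =
      @measurableAtom V (alg A w k) '' {r | F r = none} := by
  let _ := alg A w k
  ext E
  constructor
  · rintro ⟨hE, i, hiE, hi⟩
    refine ⟨rootOf F i, hF.1.1.apply_rootOf i, ?_⟩
    rw [measurableAtom_alg_rootOf hconv hF hi, hE.eq_measurableAtom hiE]
  · rintro ⟨r, hr, rfl⟩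
    exact ⟨isElementary_measurableAtom r, r, mem_measurableAtom_self r, F, hF, hr⟩

lemma ncard_setOf_eq_none (F : V → Option V) : {r | F r = none}.ncard = numTrees F := by
  rw [← card_rootFinset, ← Set.ncard_coe_finset]
  congr 1
  ext
  simp

end ElementarySets

theorem card_marked_elementary_general {V : Type*} [Fintype V]
    (A : V → V → Prop) (w : V → V → ℝ) (k : ℕ)
    (hk : 2 ≤ k) (hk' : k + 1 ≤ Fintype.card V)
    (hEx : ∃ F, IsSpanningForest A F ∧ numTrees F = k - 1)
    (hlt : phi A w (k - 1) - phi A w k > phi A w k - phi A w (k + 1)) :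
    {E : Set V | IsElementary (alg A w k) E ∧ ∃ i ∈ E, IsMarked A w k i}.ncard = k := by
  obtain ⟨F, hF⟩ : ∃ F, ExtremeForest A w k F := by
    obtain ⟨G, hG, hGn⟩ := hEx
    obtain ⟨G', hG', hG'n⟩ := exists_spanningForest_succ hG (by omega)
    exact exists_extremeForest hG' (by omega)
  rw [setOf_isElementary_isMarked_eq_image hlt hF,
    (injOn_measurableAtom_alg hF).ncard_image, ncard_setOf_eq_none, hF.2.1]

/-- Under the strict convexity inequality, the algebra `A_k` contains exactly `k` marked
elementary sets. -/
theorem card_marked_elementary {V : Type*} [Fintype V] [DecidableEq V]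
    (A : V → V → Prop) (w : V → V → ℝ) (k : ℕ)
    (hk : 2 ≤ k) (hk' : k + 1 ≤ Fintype.card V)
    (hEx : ∃ F, IsSpanningForest A F ∧ numTrees F = k - 1)
    (hlt : phi A w (k - 1) - phi A w k > phi A w k - phi A w (k + 1)) :
    {E : Set V | IsElementary (alg A w k) E ∧ ∃ i ∈ E, IsMarked A w k i}.ncard = k :=
  card_marked_elementary_general A w k hk hk' hEx hlt
end
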